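/- Let K be a simplicial complex on [m] such that Bier(K) is a weak suspension but not a suspension. Then χ(Bier(K)) = m. -/

import Mathlib

open Finset

/-- A (finite abstract) simplicial complex on the vertex type `α`:
a set of finite subsets containing `∅` and closed under taking subsets. -/
def IsSimplicialComplex {α : Type*} (K : Set (Finset α)) : Prop :=
  ∅ ∈ K ∧ ∀ σ ∈ K, ∀ τ ⊆ σ, τ ∈ K

/-- The Alexander dual of `K` on `[m]`: `J ∈ K^∨` iff `[m] \ J ∉ K`. -/
def dualK {m : ℕ} (K : Set (Finset (Fin m))) : Set (Finset (Fin m)) :=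
  {J | Finset.univ \ J ∉ K}

/-- The Bier sphere of `K`: the deleted join of `K` and its Alexander dual,
on the vertex set `[m] ⊔ [m']` (encoded as `Fin m ⊕ Fin m`, `inl` = unprimed,
`inr` = primed). -/
def bier {m : ℕ} (K : Set (Finset (Fin m))) : Set (Finset (Fin m ⊕ Fin m)) :=
  {S | ∃ I J : Finset (Fin m), I ∈ K ∧ J ∈ dualK K ∧ Disjoint I J ∧
    S = I.map Function.Embedding.inl ∪ J.map Function.Embedding.inr}

/-- The chromatic number of (the 1-skeleton of) a simplicial complex `L`:
the least `n` such that the (geometric) vertices can be colored with `n` colors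
so that the endpoints of every edge of `L` get different colors. -/
noncomputable def chrom {α : Type*} [DecidableEq α] (L : Set (Finset α)) : ℕ :=
  sInf {n : ℕ | ∃ c : α → ℕ, (∀ i : α, ({i} : Finset α) ∈ L → c i < n) ∧
    ∀ i j : α, i ≠ j → ({i, j} : Finset α) ∈ L → c i ≠ c j}

/-- `L` is a weak suspension with vertex pair `{a,b}`: `a ≠ b` are vertices,
`{a,b}` is not an edge, and every other vertex is adjacent to both `a` and `b`. -/
def IsWeakSuspensionPair {β : Type*} [DecidableEq β] (L : Set (Finset β)) (a b : β) : Prop :=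
  a ≠ b ∧ ({a} : Finset β) ∈ L ∧ ({b} : Finset β) ∈ L ∧ ({a, b} : Finset β) ∉ L ∧
    ∀ v : β, ({v} : Finset β) ∈ L → v ≠ a → v ≠ b →
      ({a, v} : Finset β) ∈ L ∧ ({b, v} : Finset β) ∈ L

/-- `L` is a suspension with vertex pair `{a,b}`: `L = ∂Δ_{{a,b}} * L'` where
`L'` is the full subcomplex of `L` on the remaining vertices. -/
def IsSuspensionPair {β : Type*} [DecidableEq β] (L : Set (Finset β)) (a b : β) : Prop :=
  a ≠ b ∧ ∀ S : Finset β, S ∈ L ↔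
    ∃ τ s : Finset β, (τ = ∅ ∨ τ = {a} ∨ τ = {b}) ∧
      s ∈ L ∧ a ∉ s ∧ b ∉ s ∧ S = τ ∪ s

variable {m : ℕ} {K : Set (Finset (Fin m))}

lemma dual_down (hK : IsSimplicialComplex K) {J' J : Finset (Fin m)} (h : J' ⊆ J)
    (hJ : J ∈ dualK K) : J' ∈ dualK K := by
  intro hmem
  exact hJ (hK.2 _ hmem _ (sdiff_subset_sdiff (Finset.Subset.refl _) h))

lemma empty_dual (hKne : Finset.univ ∉ K) : (∅ : Finset (Fin m)) ∈ dualK K := by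
  simpa [dualK] using hKne

lemma bier_down (hK : IsSimplicialComplex K) {S T : Finset (Fin m ⊕ Fin m)}
    (hS : S ∈ bier K) (hT : T ⊆ S) : T ∈ bier K := by
  obtain ⟨I, J, hI, hJ, hd, rfl⟩ := hS
  refine ⟨I.filter (fun i => Sum.inl i ∈ T), J.filter (fun j => Sum.inr j ∈ T),
    hK.2 _ hI _ (filter_subset _ _), dual_down hK (filter_subset _ _) hJ,
    hd.mono (filter_subset _ _) (filter_subset _ _), ?_⟩
  ext x
  cases x with
  | inl a =>
    simp only [mem_union, mem_map, mem_filter] <;> constructor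
    · intro hx
      exact Or.inl ⟨a, ⟨by have := hT hx; simpa using this, hx⟩, rfl⟩
    · rintro (⟨i, ⟨hi, h2⟩, h3⟩ | ⟨j, ⟨hj, h2⟩, h3⟩) <;> simp_all
  | inr a =>
    simp only [mem_union, mem_map, mem_filter] <;> constructor
    · intro hx
      exact Or.inr ⟨a, ⟨by have := hT hx; simpa using this, hx⟩, rfl⟩
    · rintro (⟨i, ⟨hi, h2⟩, h3⟩ | ⟨j, ⟨hj, h2⟩, h3⟩) <;> simp_all

lemma susp_of_cone (hK : IsSimplicialComplex K) (i : Fin m)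
    (hc : ∀ σ ∈ K, i ∉ σ → insert i σ ∈ K) :
    IsSuspensionPair (bier K) (Sum.inl i) (Sum.inr i) := by
  constructor
  · simp
  intro S
  constructor
  · rintro ⟨I, J, hI, hJ, hd, rfl⟩
    by_cases hiI : i ∈ I
    · refine ⟨{Sum.inl i}, (I.erase i).map Function.Embedding.inl ∪ J.map Function.Embedding.inr,
        Or.inr (Or.inl rfl),
        ⟨I.erase i, J, hK.2 _ hI _ (erase_subset _ _), hJ, hd.mono_left (erase_subset _ _), rfl⟩,
        by simp, by simp [disjoint_left.mp hd hiI], ?_⟩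
      ext x; cases x <;> simp [Finset.mem_erase] <;> (try tauto) <;> (rename_i v; by_cases hv : v = i <;> simp_all)
    · by_cases hiJ : i ∈ J
      · refine ⟨{Sum.inr i}, I.map Function.Embedding.inl ∪ (J.erase i).map Function.Embedding.inr,
          Or.inr (Or.inr rfl),
          ⟨I, J.erase i, hI, dual_down hK (erase_subset _ _) hJ, hd.mono_right (erase_subset _ _), rfl⟩,
          by simp [hiI], by simp, ?_⟩
        ext x; cases x <;> simp [Finset.mem_erase] <;> (try tauto) <;> (rename_i v; by_cases hv : v = i <;> simp_all)
      · exact ⟨∅, _, Or.inl rfl, ⟨I, J, hI, hJ, hd, rfl⟩, by simp [hiI], by simp [hiJ], by simp⟩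
  · rintro ⟨τ, s, hτ, ⟨I, J, hI, hJ, hd, rfl⟩, ha, hb, rfl⟩
    have hiI : i ∉ I := fun h => ha (by simp [h])
    have hiJ : i ∉ J := fun h => hb (by simp [h])
    rcases hτ with rfl | rfl | rfl
    · exact ⟨I, J, hI, hJ, hd, by simp⟩
    · refine ⟨insert i I, J, hc I hI hiI, hJ, by simp [hiJ, hd], ?_⟩
      ext x; cases x <;> simp <;> tauto
    · refine ⟨I, insert i J, hI, ?_, by simp [hiI, hd], ?_⟩
      · intro hmem
        apply hJ
        have h1 : insert i (univ \ insert i J) = univ \ J := by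
          ext x; by_cases hx : x = i <;> simp [hx, hiJ]
        rw [← h1]
        exact hc _ hmem (by simp)
      · ext x; cases x <;> simp <;> tauto

lemma wsp_symm {β : Type*} [DecidableEq β] {L : Set (Finset β)} {a b : β}
    (h : IsWeakSuspensionPair L a b) : IsWeakSuspensionPair L b a :=
  ⟨h.1.symm, h.2.2.1, h.2.1, by rw [Finset.pair_comm]; exact h.2.2.2.1,
   fun v hv h1 h2 => (h.2.2.2.2 v hv h2 h1).symm⟩

lemma mem_I {S : Finset (Fin m ⊕ Fin m)} {I J : Finset (Fin m)}
    (h : S = I.map Function.Embedding.inl ∪ J.map Function.Embedding.inr) (x : Fin m) :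
    Sum.inl x ∈ S ↔ x ∈ I := by subst h; simp

lemma mem_J {S : Finset (Fin m ⊕ Fin m)} {I J : Finset (Fin m)}
    (h : S = I.map Function.Embedding.inl ∪ J.map Function.Embedding.inr) (x : Fin m) :
    Sum.inr x ∈ S ↔ x ∈ J := by subst h; simp

/-- `{inl p} ∈ bier K` implies `{p} ∈ K`. -/
lemma vert_inl {p : Fin m} (h : ({Sum.inl p} : Finset (Fin m ⊕ Fin m)) ∈ bier K) : {p} ∈ K := by
  obtain ⟨I, J, hI, hJ, hd, he⟩ := h
  have h1 : I = {p} := by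
    ext x
    rw [← mem_I he x]
    simp
  rwa [h1] at hI

lemma vert_inl' (hK : IsSimplicialComplex K) (hKne : Finset.univ ∉ K) {p : Fin m}
    (h : {p} ∈ K) : ({Sum.inl p} : Finset (Fin m ⊕ Fin m)) ∈ bier K :=
  ⟨{p}, ∅, h, by simpa [dualK] using hKne, by simp, by simp⟩

lemma vert_inr {p : Fin m} (h : ({Sum.inr p} : Finset (Fin m ⊕ Fin m)) ∈ bier K) :
    univ \ {p} ∉ K := by
  obtain ⟨I, J, hI, hJ, hd, he⟩ := h
  have h1 : J = {p} := by
    ext x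
    rw [← mem_J he x]
    simp
  rwa [h1] at hJ

lemma vert_inr' (hK : IsSimplicialComplex K) {p : Fin m}
    (h : univ \ {p} ∉ K) : ({Sum.inr p} : Finset (Fin m ⊕ Fin m)) ∈ bier K :=
  ⟨∅, {p}, hK.1, h, by simp, by simp⟩

lemma no_antipodal {p : Fin m} : ({Sum.inl p, Sum.inr p} : Finset (Fin m ⊕ Fin m)) ∉ bier K := by
  rintro ⟨I, J, hI, hJ, hd, he⟩
  have h1 : p ∈ I := (mem_I he p).mp (by simp)
  have h2 : p ∈ J := (mem_J he p).mp (by simp)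
  exact disjoint_left.mp hd h1 h2

lemma empty_bier (hK : IsSimplicialComplex K) (hKne : Finset.univ ∉ K) :
    (∅ : Finset (Fin m ⊕ Fin m)) ∈ bier K :=
  ⟨∅, ∅, hK.1, by simpa [dualK] using hKne, by simp, by simp⟩

/-- classification helper: a finset whose elements are all `p` or `q`, not both present. -/
lemma classify {I : Finset (Fin m)} {p q : Fin m} (hsub : ∀ x ∈ I, x = p ∨ x = q)
    (hnb : ¬(p ∈ I ∧ q ∈ I)) : I = ∅ ∨ I = {p} ∨ I = {q} := by
  by_cases h1 : p ∈ I <;> by_cases h2 : q ∈ I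
  · tauto
  · refine Or.inr (Or.inl ?_)
    ext x; simp only [mem_singleton]
    constructor
    · intro hx; rcases hsub x hx with rfl | rfl
      · rfl
      · exact absurd hx h2
    · rintro rfl; exact h1
  · refine Or.inr (Or.inr ?_)
    ext x; simp only [mem_singleton]
    constructor
    · intro hx; rcases hsub x hx with rfl | rfl
      · exact absurd hx h1
      · rfl
    · rintro rfl; exact h2
  · left
    ext x; simp only [Finset.notMem_empty, iff_false]
    intro hx; rcases hsub x hx with rfl | rfl
    · exact h1 hx
    · exact h2 hx

lemma antipodal (hK : IsSimplicialComplex K) (hKne : Finset.univ ∉ K)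
    (hws : ∃ a b : Fin m ⊕ Fin m, IsWeakSuspensionPair (bier K) a b)
    (hns : ¬ ∃ a b : Fin m ⊕ Fin m, IsSuspensionPair (bier K) a b) :
    ∃ p : Fin m, IsWeakSuspensionPair (bier K) (Sum.inl p) (Sum.inr p) := by
  -- the two degenerate cases, as a helper within
  obtain ⟨a, b, hw⟩ := hws
  have mixed : ∀ p q : Fin m, IsWeakSuspensionPair (bier K) (Sum.inl p) (Sum.inr q) →
      ∃ p' : Fin m, IsWeakSuspensionPair (bier K) (Sum.inl p') (Sum.inr p') := by
    intro p q hw'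
    rcases eq_or_ne p q with rfl | hpq
    · exact ⟨p, hw'⟩
    · exfalso
      refine hw'.2.2.2.1 ⟨{p}, {q}, vert_inl hw'.2.1, vert_inr hw'.2.2.1, by simp [hpq, Ne.symm hpq], ?_⟩
      ext x; cases x <;> simp
  rcases a with p | p <;> rcases b with q | q
  · -- both left
    exfalso
    have hpq : p ≠ q := fun h => hw.1 (by rw [h])
    have hp : {p} ∈ K := vert_inl hw.2.1
    have hq : {q} ∈ K := vert_inl hw.2.2.1
    have hpqK : ({p, q} : Finset (Fin m)) ∉ K := by
      intro h
      refine hw.2.2.2.1 ⟨{p, q}, ∅, h, by simpa [dualK] using hKne, by simp, ?_⟩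
      ext x; cases x <;> simp
    have hup : univ \ {p} ∈ K := by
      by_contra hc
      have h1 := (hw.2.2.2.2 (Sum.inr p) (vert_inr' hK hc) (by simp) (by simp)).1
      exact no_antipodal h1
    have huq : univ \ {q} ∈ K := by
      by_contra hc
      have h1 := (hw.2.2.2.2 (Sum.inr q) (vert_inr' hK hc) (by simp) (by simp)).2
      exact no_antipodal h1
    have hchar : ∀ σ : Finset (Fin m), σ ∈ K ↔ (p ∉ σ ∨ q ∉ σ) := by
      intro σ
      constructor
      · intro hσ
        by_contra hc
        push_neg at hc
        refine hpqK (hK.2 _ hσ _ ?_)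
        intro x hx
        simp only [mem_insert, mem_singleton] at hx
        rcases hx with rfl | rfl
        · exact hc.1
        · exact hc.2
      · rintro (h | h)
        · refine hK.2 _ hup _ (fun x hx => ?_)
          simp only [mem_sdiff, mem_univ, mem_singleton, true_and]
          rintro rfl; exact h hx
        · refine hK.2 _ huq _ (fun x hx => ?_)
          simp only [mem_sdiff, mem_univ, mem_singleton, true_and]
          rintro rfl; exact h hx
    by_cases hr : ∀ r : Fin m, r = p ∨ r = q
    · -- degenerate suspension at (inl p, inl q)
      apply hns
      have hclass : ∀ S ∈ bier K, S = ∅ ∨ S = {Sum.inl p} ∨ S = {Sum.inl q} := by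
        rintro S ⟨I, J, hI, hJ, hd, he⟩
        have hJ0 : J = ∅ := by
          have h1 : p ∉ J ∧ q ∉ J := by
            have h2 := (hchar (univ \ J)).not.mp hJ
            push_neg at h2
            constructor
            · intro hc; exact absurd (h2.1) (by simp [hc])
            · intro hc; exact absurd (h2.2) (by simp [hc])
          ext j
          simp only [Finset.notMem_empty, iff_false]
          intro hj
          rcases hr j with rfl | rfl
          · exact h1.1 hj
          · exact h1.2 hj
        have hIc := classify (fun x _ => hr x)
          (fun h => by rcases (hchar I).mp hI with h' | h' <;> tauto)
        subst he hJ0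
        rcases hIc with h | h | h <;> rw [h] <;> simp
      refine ⟨Sum.inl p, Sum.inl q, by simp [hpq], fun S => ⟨?_, ?_⟩⟩
      · intro hS
        refine ⟨S, ∅, ?_, empty_bier hK hKne, by simp, by simp, by simp⟩
        exact hclass S hS
      · rintro ⟨τ, s, hτ, hs, ha, hb, rfl⟩
        have hs0 : s = ∅ := by
          rcases hclass s hs with h | h | h
          · exact h
          · exact absurd (h ▸ mem_singleton_self _) (h ▸ ha)
          · exact absurd (h ▸ mem_singleton_self _) (h ▸ hb)
        subst hs0
        rcases hτ with rfl | rfl | rfl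
        · simpa using empty_bier hK hKne
        · simpa using vert_inl' hK hKne hp
        · simpa using vert_inl' hK hKne hq
    · push_neg at hr
      obtain ⟨r, hrp, hrq⟩ := hr
      refine hns ⟨_, _, susp_of_cone hK r (fun σ hσ hrσ => ?_)⟩
      rcases (hchar σ).mp hσ with h | h
      · exact (hchar _).mpr (Or.inl (by simp [h, hrp.symm, Ne.symm hrp]))
      · exact (hchar _).mpr (Or.inr (by simp [h, Ne.symm hrq]))
  · -- inl p, inr q : mixed
    exact mixed p q hw
  · -- inr p, inl q : mixed, symm
    exact mixed q p (wsp_symm hw)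
  · -- both right
    exfalso
    have hpq : p ≠ q := fun h => hw.1 (by rw [h])
    have hupn : univ \ {p} ∉ K := vert_inr hw.2.1
    have huqn : univ \ {q} ∉ K := vert_inr hw.2.2.1
    have hKpq : univ \ {p, q} ∈ K := by
      by_contra hc
      refine hw.2.2.2.1 ⟨∅, {p, q}, hK.1, hc, by simp, ?_⟩
      ext x; cases x <;> simp
    have hpn : ({p} : Finset (Fin m)) ∉ K := by
      intro h
      have h1 := (hw.2.2.2.2 (Sum.inl p) (vert_inl' hK hKne h) (by simp) (by simp)).1
      rw [Finset.pair_comm] at h1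
      exact no_antipodal h1
    have hqn : ({q} : Finset (Fin m)) ∉ K := by
      intro h
      have h1 := (hw.2.2.2.2 (Sum.inl q) (vert_inl' hK hKne h) (by simp) (by simp)).2
      rw [Finset.pair_comm] at h1
      exact no_antipodal h1
    have hchar : ∀ σ : Finset (Fin m), σ ∈ K ↔ (p ∉ σ ∧ q ∉ σ) := by
      intro σ
      constructor
      · intro hσ
        constructor
        · intro hc; exact hpn (hK.2 _ hσ _ (by simpa using hc))
        · intro hc; exact hqn (hK.2 _ hσ _ (by simpa using hc))
      · rintro ⟨h1, h2⟩
        refine hK.2 _ hKpq _ (fun x hx => ?_)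
        simp only [mem_sdiff, mem_univ, mem_insert, mem_singleton, true_and]
        rintro (rfl | rfl)
        · exact h1 hx
        · exact h2 hx
    by_cases hr : ∀ r : Fin m, r = p ∨ r = q
    · apply hns
      have hclass : ∀ S ∈ bier K, S = ∅ ∨ S = {Sum.inr p} ∨ S = {Sum.inr q} := by
        rintro S ⟨I, J, hI, hJ, hd, he⟩
        have hI0 : I = ∅ := by
          have h1 := (hchar I).mp hI
          ext x
          simp only [Finset.notMem_empty, iff_false]
          intro hx
          rcases hr x with rfl | rfl
          · exact h1.1 hx
          · exact h1.2 hx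
        have hnb : ¬(p ∈ J ∧ q ∈ J) := by
          rintro ⟨h1, h2⟩
          refine hJ ((hchar _).mpr ⟨by simp [h1], by simp [h2]⟩)
        have hJc := classify (fun x _ => hr x) hnb
        subst he hI0
        rcases hJc with h | h | h <;> rw [h] <;> simp
      refine ⟨Sum.inr p, Sum.inr q, by simp [hpq], fun S => ⟨?_, ?_⟩⟩
      · intro hS
        refine ⟨S, ∅, ?_, empty_bier hK hKne, by simp, by simp, by simp⟩
        exact hclass S hS
      · rintro ⟨τ, s, hτ, hs, ha, hb, rfl⟩
        have hs0 : s = ∅ := by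
          rcases hclass s hs with h | h | h
          · exact h
          · exact absurd (h ▸ mem_singleton_self _) (h ▸ ha)
          · exact absurd (h ▸ mem_singleton_self _) (h ▸ hb)
        subst hs0
        rcases hτ with rfl | rfl | rfl
        · simpa using empty_bier hK hKne
        · simpa using vert_inr' hK hupn
        · simpa using vert_inr' hK huqn
    · push_neg at hr
      obtain ⟨r, hrp, hrq⟩ := hr
      refine hns ⟨_, _, susp_of_cone hK r (fun σ hσ hrσ => ?_)⟩
      have h1 := (hchar σ).mp hσ
      exact (hchar _).mpr ⟨by simp [h1.1, Ne.symm hrp], by simp [h1.2, Ne.symm hrq]⟩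


/-- if `Bier(K)` is a weak suspension but not a suspension,
then `χ(Bier(K)) = m`. -/
theorem chrom_of_weak_not_suspension {m : ℕ} (K : Set (Finset (Fin m)))
    (hK : IsSimplicialComplex K) (hKne : Finset.univ ∉ K)
    (hws : ∃ a b : Fin m ⊕ Fin m, IsWeakSuspensionPair (bier K) a b)
    (hns : ¬ ∃ a b : Fin m ⊕ Fin m, IsSuspensionPair (bier K) a b) :
    chrom (bier K) = m := by
  obtain ⟨p, hw⟩ := antipodal hK hKne hws hns
  -- the m-coloring
  have hm_mem : m ∈ {n : ℕ | ∃ c : Fin m ⊕ Fin m → ℕ,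
      (∀ i, ({i} : Finset (Fin m ⊕ Fin m)) ∈ bier K → c i < n) ∧
      ∀ i j, i ≠ j → ({i, j} : Finset (Fin m ⊕ Fin m)) ∈ bier K → c i ≠ c j} := by
    refine ⟨Sum.elim Fin.val Fin.val, fun i _ => ?_, fun i j hij he hc => ?_⟩
    · cases i <;> exact Fin.is_lt _
    · rcases i with i | i <;> rcases j with j | j <;> simp only [Sum.elim_inl, Sum.elim_inr] at hc
      · exact hij (by rw [Fin.val_injective hc])
      · have : i = j := Fin.val_injective hc
        subst this
        exact no_antipodal he
      · have : i = j := Fin.val_injective hc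
        subst this
        rw [Finset.pair_comm] at he
        exact no_antipodal he
      · exact hij (by rw [Fin.val_injective hc])
  refine le_antisymm (Nat.sInf_le hm_mem) (le_csInf ⟨m, hm_mem⟩ ?_)
  rintro n ⟨c, hc1, hc2⟩
  by_contra hlt
  push_neg at hlt
  -- p is free
  have hfree : ∃ σ ∈ K, p ∉ σ ∧ insert p σ ∉ K := by
    by_contra h
    push_neg at h
    exact hns ⟨_, _, susp_of_cone hK p h⟩
  obtain ⟨σ, hσK, hpσ, hins⟩ := hfree
  set F : Finset (Fin m ⊕ Fin m) :=
    σ.map Function.Embedding.inl ∪ (univ \ insert p σ).map Function.Embedding.inr with hFdef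
  have hsd : univ \ (univ \ insert p σ) = insert p σ := by
    ext x; simp
  have hF : F ∈ bier K := by
    refine ⟨σ, univ \ insert p σ, hσK, ?_, ?_, rfl⟩
    · rw [dualK, Set.mem_setOf_eq]
      show univ \ (univ \ insert p σ) ∉ K
      rw [hsd]; exact hins
    · rw [Finset.disjoint_left]
      intro x hx
      simp only [mem_sdiff, mem_univ, true_and, not_not]
      exact mem_insert_of_mem hx
  -- card of F
  have hcard : F.card = m - 1 := by
    rw [hFdef, Finset.card_union_of_disjoint (by simp [Finset.disjoint_left]),
      Finset.card_map, Finset.card_map, Finset.card_sdiff_of_subset (subset_univ _), card_univ,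
      Fintype.card_fin, Finset.card_insert_of_notMem hpσ]
    have : σ.card + 1 ≤ m := by
      simpa [Finset.card_insert_of_notMem hpσ] using Finset.card_le_univ (insert p σ)
    omega
  -- no inl p / inr p in F
  have hpF : Sum.inl p ∉ F ∧ Sum.inr p ∉ F := by
    constructor <;> · rw [hFdef]; simp [hpσ]
  -- every element of F is a vertex
  have hvert : ∀ u ∈ F, ({u} : Finset (Fin m ⊕ Fin m)) ∈ bier K := by
    intro u hu
    exact bier_down hK hF (by simpa using hu)
  -- c injective on F
  have hinj : Set.InjOn c F := by
    intro u hu v hv huv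
    by_contra hne
    exact hc2 u v hne (bier_down hK hF (by
      intro x hx
      simp only [mem_insert, mem_singleton] at hx
      rcases hx with rfl | rfl
      · exact hu
      · exact hv)) huv
  have himage : F.image c = Finset.range n := by
    refine Finset.eq_of_subset_of_card_le ?_ ?_
    · intro x hx
      obtain ⟨u, hu, rfl⟩ := Finset.mem_image.mp hx
      exact Finset.mem_range.mpr (hc1 u (hvert u hu))
    · rw [Finset.card_range, Finset.card_image_of_injOn hinj, hcard]
      omega
  have hx : c (Sum.inl p) ∈ Finset.range n := Finset.mem_range.mpr (hc1 _ hw.2.1)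
  rw [← himage] at hx
  obtain ⟨u, huF, hcu⟩ := Finset.mem_image.mp hx
  -- u is adjacent to inl p by weak suspension
  have hune : u ≠ Sum.inl p := fun h => hpF.1 (h ▸ huF)
  have hune' : u ≠ Sum.inr p := fun h => hpF.2 (h ▸ huF)
  have hedge : ({Sum.inl p, u} : Finset (Fin m ⊕ Fin m)) ∈ bier K :=
    (hw.2.2.2.2 u (hvert u huF) hune hune').1
  exact hc2 (Sum.inl p) u (Ne.symm hune) hedge hcu.symm
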